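/- arXiv:2305.04192 — 3 statements merged into one kernel-verified Lean document; each statement's English description precedes it below -/
import Mathlib

section
/- Define c_r on binary rooted trees by c_r(leaf) = 0 and c_r(t) = (c_r(t_L)+1)(c_r(t_R)+1) where t_L, t_R are the two root subtrees. Define c by c(leaf) = 0 and c(t) = c(t_L) + c(t_R) + c_r(t). Then for every binary rooted tree t with n leaves, c_r(t) ≤ c(t) ≤ (2n-1) c_r(t). -/
/-- Plane binary rooted trees: every internal node has exactly two children. -/
inductive BTree where
  | leaf : BTree
  | node : BTree → BTree → BTree

/-- Number of leaves. -/
def BTree.nLeaves : BTree → ℕ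
  | .leaf => 1
  | .node l r => l.nLeaves + r.nLeaves

/-- Number of root ancestral configurations. -/
def BTree.cr : BTree → ℕ
  | .leaf => 0
  | .node l r => (l.cr + 1) * (r.cr + 1)

/-- Total number of ancestral configurations. -/
def BTree.ctot : BTree → ℕ
  | .leaf => 0
  | .node l r => l.ctot + r.ctot + (BTree.node l r).cr

lemma BTree.nLeaves_pos (t : BTree) : 1 ≤ t.nLeaves := by
  induction t with
  | leaf => simp [BTree.nLeaves]
  | node l r ihl ihr => simp [BTree.nLeaves]; omega

theorem cr_le_ctot_le (t : BTree) :
    t.cr ≤ t.ctot ∧ t.ctot ≤ (2 * t.nLeaves - 1) * t.cr := by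
  induction t with
  | leaf => simp [BTree.cr, BTree.ctot]
  | node l r ihl ihr =>
    obtain ⟨h1l, h2l⟩ := ihl
    obtain ⟨h1r, h2r⟩ := ihr
    have hnl := l.nLeaves_pos
    have hnr := r.nLeaves_pos
    simp only [BTree.cr, BTree.ctot, BTree.nLeaves]
    constructor
    · omega
    · have arith : ∀ p q a b : ℕ, p * a + q * b + (a + 1) * (b + 1)
          ≤ (p + q + 1) * ((a + 1) * (b + 1)) := by
        intro p q a b; nlinarith [Nat.mul_le_mul_left p (by nlinarith : a ≤ (a+1)*(b+1)),
          Nat.mul_le_mul_left q (by nlinarith : b ≤ (a+1)*(b+1))]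
      have e : 2 * (l.nLeaves + r.nLeaves) - 1
          = (2 * l.nLeaves - 1) + (2 * r.nLeaves - 1) + 1 := by omega
      calc l.ctot + r.ctot + (l.cr + 1) * (r.cr + 1)
          ≤ (2 * l.nLeaves - 1) * l.cr + (2 * r.nLeaves - 1) * r.cr
            + (l.cr + 1) * (r.cr + 1) := by omega
        _ ≤ ((2 * l.nLeaves - 1) + (2 * r.nLeaves - 1) + 1)
            * ((l.cr + 1) * (r.cr + 1)) := arith _ _ _ _
        _ = (2 * (l.nLeaves + r.nLeaves) - 1) * ((l.cr + 1) * (r.cr + 1)) := by rw [e]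
end

section
/- Let a_n = C_{n-1} * E[R_n] where E[R_n] is the average over all C_{n-1} ordered binary trees with n leaves of the root configuration count c_r. Then a_1 = 0 and for n ≥ 2, a_n = sum_{j=1}^{n-1} [a_j a_{n-j} + a_j C_{n-1-j} + C_{j-1} a_{n-j} + C_{j-1} C_{n-1-j}]. Equivalently, defining R(z) = sum_{n≥1} a_n z^n and C(z) the Catalan generating function, R(z) = R(z)^2 + 2 z C(z) R(z) + z^2 C(z)^2 as formal power series. -/
/-- The m-th Catalan number C_m = binomial(2m, m)/(m+1). -/
def catalanNum (m : ℕ) : ℕ := (2 * m).choose m / (m + 1)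

/-- a_n = C_{n-1} E[R_n]: the sum of the root configuration counts over all
ordered binary trees with n leaves. -/
noncomputable def a (n : ℕ) : ℕ := ∑ᶠ t : {t : BTree // t.nLeaves = n}, (t : BTree).cr

/-- Generating function R(z) = ∑ a_n z^n. -/
noncomputable def Rser : PowerSeries ℕ := PowerSeries.mk a

/-- Catalan generating function C(z). -/
noncomputable def Cser : PowerSeries ℕ := PowerSeries.mk catalanNum

open Finset PowerSeries

deriving instance DecidableEq for BTree

namespace BTree

theorem one_le_nLeaves (t : BTree) : 1 ≤ t.nLeaves := by
  induction t with
  | leaf => rfl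
  | node l r hl _ => exact hl.trans (Nat.le_add_right _ _)

def withLeaves : ℕ → Finset BTree
  | 0 => ∅
  | 1 => {leaf}
  | m + 2 => (antidiagonal m).attach.biUnion fun p =>
      (withLeaves (p.1.1 + 1) ×ˢ withLeaves (p.1.2 + 1)).image fun lr => node lr.1 lr.2
  decreasing_by all_goals have := mem_antidiagonal.mp p.2; omega

theorem mem_withLeaves {n : ℕ} {t : BTree} : t ∈ withLeaves n ↔ t.nLeaves = n := by
  induction n using Nat.strong_induction_on generalizing t with
  | _ n ih =>
    match n, t with
    | 0, t => simpa [withLeaves] using Nat.one_le_iff_ne_zero.mp (one_le_nLeaves t)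
    | 1, leaf => simp [withLeaves, nLeaves]
    | 1, node l r =>
      have := one_le_nLeaves l; have := one_le_nLeaves r
      simp only [withLeaves, mem_singleton, reduceCtorEq, nLeaves, false_iff]; omega
    | m + 2, leaf => simp [withLeaves, nLeaves]
    | m + 2, node l r =>
      have := one_le_nLeaves l; have := one_le_nLeaves r
      simp only [withLeaves, mem_biUnion, mem_attach, mem_image, mem_product, node.injEq,
        Prod.exists, exists_eq_right_right, exists_eq_right, true_and, Subtype.exists,
        HasAntidiagonal.mem_antidiagonal, exists_and_left, exists_prop, nLeaves]
      constructor
      · rintro ⟨i, hl, j, rfl, hr⟩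
        rw [ih _ (by omega)] at hl hr
        omega
      · intro h
        refine ⟨l.nLeaves - 1, ?_, r.nLeaves - 1, by omega, ?_⟩ <;> rw [ih _ (by omega)] <;> omega

theorem sum_withLeaves_add_two {M : Type*} [AddCommMonoid M] (f : BTree → M) (m : ℕ) :
    ∑ t ∈ withLeaves (m + 2), f t =
      ∑ p ∈ antidiagonal m, ∑ l ∈ withLeaves (p.1 + 1), ∑ r ∈ withLeaves (p.2 + 1),
        f (node l r) := by
  rw [withLeaves, sum_biUnion, ← sum_attach (antidiagonal m)]
  · refine sum_congr rfl fun p _ => ?_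
    rw [sum_image fun lr _ lr' _ h => by simpa [Prod.ext_iff] using h, sum_product]
  · rintro p - q - hpq
    refine disjoint_left.mpr fun t htp htq => hpq ?_
    simp only [mem_image, mem_product, mem_withLeaves] at htp htq
    obtain ⟨⟨l, r⟩, ⟨hl, -⟩, rfl⟩ := htp
    obtain ⟨⟨l', r'⟩, ⟨hl', -⟩, h⟩ := htq
    obtain ⟨rfl, rfl⟩ := node.inj h
    have hp := mem_antidiagonal.mp p.2
    have hq := mem_antidiagonal.mp q.2
    dsimp only at hl hl'
    ext; omega

theorem card_withLeaves_succ (n : ℕ) : #(withLeaves (n + 1)) = catalan n := by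
  induction n using Nat.strong_induction_on with
  | _ n ih =>
    cases n with
    | zero => simp [withLeaves]
    | succ m =>
      rw [card_eq_sum_ones, sum_withLeaves_add_two, catalan_succ']
      refine sum_congr rfl fun p hp => ?_
      have hp := mem_antidiagonal.mp hp
      simp only [sum_const, smul_eq_mul, mul_one]
      rw [ih _ (by omega), ih _ (by omega)]

end BTree

open BTree

theorem catalanNum_eq_catalan (m : ℕ) : catalanNum m = catalan m := by
  rw [catalan_eq_centralBinom_div, Nat.centralBinom]; rfl

theorem a_eq_sum_withLeaves (n : ℕ) : a n = ∑ t ∈ withLeaves n, t.cr := by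
  rw [a, finsum_subtype_eq_finsum_cond, ← finsum_mem_coe_finset]
  simp only [mem_coe, mem_withLeaves]

def crAddOneSum (n : ℕ) : ℕ := ∑ t ∈ withLeaves n, (t.cr + 1)

theorem crAddOneSum_zero : crAddOneSum 0 = 0 := by simp [crAddOneSum, withLeaves]

theorem a_zero : a 0 = 0 := by simp [a_eq_sum_withLeaves, withLeaves]

theorem a_one : a 1 = 0 := by simp [a_eq_sum_withLeaves, withLeaves, cr]

theorem crAddOneSum_succ (n : ℕ) : crAddOneSum (n + 1) = a (n + 1) + catalanNum n := by
  rw [crAddOneSum, sum_add_distrib, ← a_eq_sum_withLeaves, ← card_eq_sum_ones,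
    card_withLeaves_succ, catalanNum_eq_catalan]

theorem a_add_two (m : ℕ) :
    a (m + 2) = ∑ p ∈ antidiagonal m, crAddOneSum (p.1 + 1) * crAddOneSum (p.2 + 1) := by
  simp only [a_eq_sum_withLeaves, sum_withLeaves_add_two, crAddOneSum, sum_mul_sum, cr]

theorem a_eq_sum_antidiagonal (n : ℕ) :
    a n = ∑ p ∈ antidiagonal n, crAddOneSum p.1 * crAddOneSum p.2 := by
  match n with
  | 0 => simp [a_zero, crAddOneSum_zero]
  | 1 => simp [a_one, Nat.sum_antidiagonal_succ, crAddOneSum_zero]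
  | m + 2 =>
    rw [Nat.sum_antidiagonal_succ, Nat.sum_antidiagonal_succ', a_add_two]
    simp only [crAddOneSum_zero, zero_mul, mul_zero, zero_add]

theorem mk_crAddOneSum : mk crAddOneSum = Rser + X * Cser := by
  ext (_ | n)
  · simp [crAddOneSum_zero, Rser, a_zero]
  · simp [crAddOneSum_succ, Rser, Cser, coeff_succ_X_mul]

theorem Rser_eq_sq : Rser = (Rser + X * Cser) ^ 2 := by
  ext n
  rw [← mk_crAddOneSum, sq, coeff_mul, Rser, coeff_mk, a_eq_sum_antidiagonal]
  simp only [coeff_mk]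

theorem a_recurrence {n : ℕ} (hn : 2 ≤ n) : a n =
    ∑ j ∈ Icc 1 (n - 1),
      (a j * a (n - j) + a j * catalanNum (n - 1 - j) +
        catalanNum (j - 1) * a (n - j) + catalanNum (j - 1) * catalanNum (n - 1 - j)) := by
  obtain ⟨m, rfl⟩ := Nat.exists_eq_add_of_le' hn
  rw [a_add_two, Nat.sum_antidiagonal_eq_sum_range_succ
      (fun i j => crAddOneSum (i + 1) * crAddOneSum (j + 1)),
    ← Ico_add_one_right_eq_Icc, sum_Ico_eq_sum_range, show m + 2 - 1 + 1 - 1 = m + 1 from rfl]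
  refine sum_congr rfl fun k hk => ?_
  have hk := mem_range.mp hk
  rw [show 1 + k - 1 = k by omega, show m + 2 - 1 - (1 + k) = m - k by omega,
    show m + 2 - (1 + k) = m - k + 1 by omega, add_comm 1 k, crAddOneSum_succ, crAddOneSum_succ]
  ring

open PowerSeries in
theorem root_config_recurrence :
    a 1 = 0 ∧
    (∀ n : ℕ, 2 ≤ n → a n =
      ∑ j ∈ Finset.Icc 1 (n - 1),
        (a j * a (n - j) + a j * catalanNum (n - 1 - j) +
          catalanNum (j - 1) * a (n - j) + catalanNum (j - 1) * catalanNum (n - 1 - j))) ∧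
    Rser = Rser ^ 2 + 2 * X * Cser * Rser + X ^ 2 * Cser ^ 2 := by
  refine ⟨a_one, fun _ hn => a_recurrence hn, ?_⟩
  calc Rser = (Rser + X * Cser) ^ 2 := Rser_eq_sq
    _ = Rser ^ 2 + 2 * X * Cser * Rser + X ^ 2 * Cser ^ 2 := by ring
end

section
/- For n ≥ 1, let e_n = E[R_n] denote the mean of c_r over uniformly random ordered unlabeled histories of size n. Then e_1 = 0 and for n ≥ 2, (n-1) e_n = sum_{j=1}^{n-1} e_j e_{n-j} + 2 sum_{j=1}^{n-1} e_j + (n-1). -/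
/-- Plane binary rooted trees with internal nodes carrying natural-number labels. -/
inductive LTree where
  | leaf : LTree
  | node : ℕ → LTree → LTree → LTree

def LTree.nLeaves : LTree → ℕ
  | .leaf => 1
  | .node _ l r => l.nLeaves + r.nLeaves

/-- Multiset of internal-node labels. -/
def LTree.ilabels : LTree → Multiset ℕ
  | .leaf => 0
  | .node k l r => k ::ₘ (l.ilabels + r.ilabels)

/-- The root label of `t` (if any) is greater than `m`. -/
def LTree.rootGt (m : ℕ) : LTree → Prop
  | .leaf => True
  | .node k _ _ => m < k

/-- Each non-root internal node has a larger label than its parent. -/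
def LTree.Increasing : LTree → Prop
  | .leaf => True
  | .node k l r => l.rootGt k ∧ r.rootGt k ∧ l.Increasing ∧ r.Increasing

/-- Ordered unlabeled histories of size n: plane binary trees with n leaves whose
internal nodes are bijectively labeled by 1,...,n-1, increasingly from the root. -/
def IsHistory (n : ℕ) (t : LTree) : Prop :=
  t.nLeaves = n ∧ t.ilabels = (Finset.Icc 1 (n - 1)).val ∧ t.Increasing

/-- Number of root ancestral configurations (depends only on the shape). -/
def LTree.cr : LTree → ℕ
  | .leaf => 0
  | .node _ l r => (l.cr + 1) * (r.cr + 1)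

/-- e_n = E[R_n]: the mean of c_r over the (n-1)! uniformly random ordered unlabeled
histories of size n. -/
noncomputable def e (n : ℕ) : ℚ :=
  (∑ᶠ t : {t : LTree // IsHistory n t}, ((t : LTree).cr : ℚ)) / (Nat.factorial (n - 1) : ℚ)

/- ### Auxiliary development -/

deriving instance DecidableEq for LTree

lemma rootGt_of_mem {t : LTree} (ht : t.Increasing) {m : ℕ} (hm : t.rootGt m) :
    ∀ x ∈ t.ilabels, m < x := by
  induction t generalizing m with
  | leaf => simp [LTree.ilabels]
  | node k l r ihl ihr =>
    obtain ⟨hl, hr, hli, hri⟩ := ht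
    intro x hx
    simp only [LTree.ilabels, Multiset.mem_cons, Multiset.mem_add] at hx
    rcases hx with rfl | hx | hx
    · exact hm
    · exact lt_trans hm (ihl hli hl x hx)
    · exact lt_trans hm (ihr hri hr x hx)

lemma nLeaves_eq_card (t : LTree) : t.nLeaves = Multiset.card t.ilabels + 1 := by
  induction t with
  | leaf => simp [LTree.nLeaves, LTree.ilabels]
  | node k l r ihl ihr =>
    simp [LTree.nLeaves, LTree.ilabels, ihl, ihr]; omega

lemma eq_leaf_of_ilabels_eq_zero {t : LTree} (h : t.ilabels = 0) : t = .leaf := by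
  cases t with
  | leaf => rfl
  | node k l r => simp [LTree.ilabels] at h

/-- The sequence `s k` = sum of `cr` over all increasing trees with `k` internal labels. -/
def s : ℕ → ℚ
  | 0 => 0
  | k + 1 => ∑ i ∈ (Finset.range (k + 1)).attach,
      ((k.choose i.1 : ℚ)) * (s i.1 + (i.1.factorial : ℚ)) *
        (s (k - i.1) + ((k - i.1).factorial : ℚ))
  decreasing_by
  · have := Finset.mem_range.mp i.2; omega
  · have := Finset.mem_range.mp i.2; omega

lemma s_succ (k : ℕ) : s (k + 1) = ∑ i ∈ Finset.range (k + 1),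
    ((k.choose i : ℚ)) * (s i + (i.factorial : ℚ)) *
      (s (k - i) + (((k - i).factorial : ℚ))) := by
  rw [s, ← Finset.sum_attach (Finset.range (k + 1))
    (fun i => ((k.choose i : ℚ)) * (s i + (i.factorial : ℚ)) *
      (s (k - i) + (((k - i).factorial : ℚ))))]

lemma key : ∀ (k : ℕ) (A : Finset ℕ), A.card = k →
    ∃ F : Finset LTree,
      (∀ t, t ∈ F ↔ (t.ilabels = A.val ∧ t.Increasing)) ∧
      F.card = k.factorial ∧
      (∑ t ∈ F, (t.cr : ℚ)) = s k := by
  intro k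
  induction k using Nat.strong_induction_on with
  | _ k ih =>
  rcases k with _ | k
  · intro A hA
    rw [Finset.card_eq_zero] at hA
    subst hA
    refine ⟨{LTree.leaf}, ?_, by simp, by simp [LTree.cr, s]⟩
    intro t
    simp only [Finset.mem_singleton, Finset.empty_val]
    constructor
    · rintro rfl; exact ⟨rfl, trivial⟩
    · rintro ⟨h, -⟩; exact eq_leaf_of_ilabels_eq_zero h
  · intro A hA
    have hAne : A.Nonempty := Finset.card_pos.mp (by omega)
    set m := A.min' hAne with hm
    set A' := A.erase m with hA'def
    have hmA : m ∈ A := A.min'_mem hAne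
    have hA'card : A'.card = k := by
      rw [hA'def, Finset.card_erase_of_mem hmA]; omega
    have hA'gt : ∀ x ∈ A', m < x := by
      intro x hx
      have hxm : x ≠ m := Finset.ne_of_mem_erase hx
      have : m ≤ x := A.min'_le x (Finset.mem_of_mem_erase hx)
      omega
    have hA'val : A'.val = A.val.erase m := Finset.erase_val A m
    have IH' : ∀ B : Finset ℕ, ∃ F : Finset LTree,
        B.card ≤ k → ((∀ t, t ∈ F ↔ (t.ilabels = B.val ∧ t.Increasing)) ∧
          F.card = B.card.factorial ∧ (∑ t ∈ F, (t.cr : ℚ)) = s B.card) := by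
      intro B
      by_cases hB : B.card ≤ k
      · obtain ⟨F, h⟩ := ih B.card (by omega) B rfl
        exact ⟨F, fun _ => h⟩
      · exact ⟨∅, fun h => absurd h hB⟩
    choose G hG using IH'
    -- facts about B ⊆ A'
    have hsub : ∀ B : Finset ℕ, B ⊆ A' → B.card ≤ k := by
      intro B hB
      have := Finset.card_le_card hB
      omega
    have hsdc : ∀ B : Finset ℕ, B ⊆ A' → (A' \ B).card = k - B.card := by
      intro B hB
      rw [Finset.card_sdiff_of_subset hB, hA'card]
    have hGmem : ∀ B : Finset ℕ, B.card ≤ k →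
        ∀ t, t ∈ G B ↔ (t.ilabels = B.val ∧ t.Increasing) :=
      fun B hB => (hG B hB).1
    -- the union decomposition value for A'
    have hvalsplit : ∀ B : Finset ℕ, B ⊆ A' → B.val + (A' \ B).val = A'.val := by
      intro B hB
      rw [Finset.sdiff_val]
      exact add_tsub_cancel_of_le (Finset.val_le_iff.mpr hB)
    classical
    -- disjointness for the biUnion
    have hdisj : (↑A'.powerset : Set (Finset ℕ)).PairwiseDisjoint (fun B =>
        ((G B) ×ˢ (G (A' \ B))).image (fun p : LTree × LTree => LTree.node m p.1 p.2)) := by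
      intro B hB B' hB' hne
      simp only [Finset.coe_powerset, Set.mem_preimage, Set.mem_powerset_iff,
        Finset.coe_subset] at hB hB'
      rw [Function.onFun, Finset.disjoint_left]
      rintro x hx hx'
      simp only [Finset.mem_image, Finset.mem_product, Prod.exists] at hx hx'
      obtain ⟨l, r, ⟨hl, -⟩, rfl⟩ := hx
      obtain ⟨l', r', ⟨hl', -⟩, heq⟩ := hx'
      have : l' = l := by injection heq
      subst this
      have h1 := ((hGmem B (hsub B hB) _).mp hl).1
      have h2 := ((hGmem B' (hsub B' hB') _).mp hl').1
      exact hne (Finset.val_injective (h1.symm.trans h2))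
    have hinj : ∀ B : Finset ℕ, ∀ p ∈ (G B) ×ˢ (G (A' \ B)), ∀ q ∈ (G B) ×ˢ (G (A' \ B)),
        LTree.node m p.1 p.2 = LTree.node m q.1 q.2 → p = q := by
      intro B p _ q _ heq
      have h1 : p.1 = q.1 := by injection heq
      have h2 : p.2 = q.2 := by injection heq
      exact Prod.ext h1 h2
    have hsum : ∀ f : LTree → ℚ,
        (∑ t ∈ A'.powerset.biUnion (fun B =>
          ((G B) ×ˢ (G (A' \ B))).image (fun p => LTree.node m p.1 p.2)), f t) =
        ∑ B ∈ A'.powerset, ∑ l ∈ G B, ∑ r ∈ G (A' \ B), f (LTree.node m l r) := by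
      intro f
      rw [Finset.sum_biUnion hdisj]
      refine Finset.sum_congr rfl fun B hB => ?_
      rw [Finset.sum_image (hinj B), Finset.sum_product]
    have hGfacts : ∀ B : Finset ℕ, B ⊆ A' →
        (G B).card = B.card.factorial ∧
        (∑ t ∈ G B, (t.cr : ℚ)) = s B.card ∧
        (G (A' \ B)).card = (k - B.card).factorial ∧
        (∑ t ∈ G (A' \ B), (t.cr : ℚ)) = s (k - B.card) := by
      intro B hB
      have h1 : (A' \ B).card ≤ k := by rw [hsdc B hB]; omega
      refine ⟨(hG B (hsub B hB)).2.1, (hG B (hsub B hB)).2.2, ?_, ?_⟩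
      · rw [(hG _ h1).2.1, hsdc B hB]
      · rw [(hG _ h1).2.2, hsdc B hB]
    refine ⟨A'.powerset.biUnion (fun B =>
      ((G B) ×ˢ (G (A' \ B))).image (fun p => LTree.node m p.1 p.2)), ?_, ?_, ?_⟩
    · -- membership characterization
      intro t
      simp only [Finset.mem_biUnion, Finset.mem_image, Finset.mem_product,
        Finset.mem_powerset, Prod.exists]
      constructor
      · rintro ⟨B, hB, l, r, ⟨hl, hr⟩, rfl⟩
        have hBk := hsub B hB
        have hCk : (A' \ B).card ≤ k := by rw [hsdc B hB]; omega
        obtain ⟨hlval, hlinc⟩ := (hGmem B hBk l).mp hl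
        obtain ⟨hrval, hrinc⟩ := (hGmem _ hCk r).mp hr
        constructor
        · show m ::ₘ (l.ilabels + r.ilabels) = A.val
          rw [hlval, hrval, hvalsplit B hB, hA'val, Multiset.cons_erase]
          exact hmA
        · refine ⟨?_, ?_, hlinc, hrinc⟩
          · cases l with
            | leaf => trivial
            | node a l1 l2 =>
              show m < a
              have : a ∈ B.val := by
                rw [← hlval]; simp [LTree.ilabels]
              exact hA'gt a (hB this)
          · cases r with
            | leaf => trivial
            | node a r1 r2 =>
              show m < a
              have : a ∈ (A' \ B).val := by
                rw [← hrval]; simp [LTree.ilabels]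
              exact hA'gt a (Finset.mem_sdiff.mp this).1
      · rintro ⟨hval, hinc⟩
        cases t with
        | leaf =>
          exfalso
          have : A.val = 0 := hval.symm
          have : A.card = 0 := by
            rw [Finset.card_def, this]; rfl
          omega
        | node a l r =>
          obtain ⟨hl, hr, hli, hri⟩ := hinc
          have hval' : a ::ₘ (l.ilabels + r.ilabels) = A.val := hval
          have haA : a ∈ A := by
            rw [Finset.mem_def, ← hval']; exact Multiset.mem_cons_self _ _
          have hgtl : ∀ x ∈ l.ilabels, a < x := rootGt_of_mem hli hl
          have hgtr : ∀ x ∈ r.ilabels, a < x := rootGt_of_mem hri hr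
          have ham : a = m := by
            have h1 : m ≤ a := A.min'_le a haA
            have h2 : m ∈ a ::ₘ (l.ilabels + r.ilabels) := by
              rw [hval']; exact hmA
            rcases Multiset.mem_cons.mp h2 with h | h
            · omega
            · rcases Multiset.mem_add.mp h with h | h
              · have := hgtl m h; omega
              · have := hgtr m h; omega
          subst ham
          have hrest : l.ilabels + r.ilabels = A'.val := by
            rw [hA'val, ← hval', Multiset.erase_cons_head]
          have hnd : (l.ilabels + r.ilabels).Nodup := by
            rw [hrest]; exact A'.nodup
          have hndl : l.ilabels.Nodup := Multiset.nodup_of_le (Multiset.le_add_right _ _) hnd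
          refine ⟨⟨l.ilabels, hndl⟩, ?_, l, r, ⟨?_, ?_⟩, rfl⟩
          · rw [← Finset.val_le_iff]
            show l.ilabels ≤ A'.val
            rw [← hrest]; exact Multiset.le_add_right _ _
          · have hBk : (⟨l.ilabels, hndl⟩ : Finset ℕ).card ≤ k := by
              have : Multiset.card l.ilabels + Multiset.card r.ilabels = k := by
                have := congrArg Multiset.card hrest
                simp only [Multiset.card_add] at this
                rw [this, ← Finset.card_def, hA'card]
              show Multiset.card l.ilabels ≤ k
              omega
            exact (hGmem _ hBk l).mpr ⟨rfl, hli⟩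
          · set B : Finset ℕ := ⟨l.ilabels, hndl⟩ with hBdef
            have hBsub : B ⊆ A' := by
              rw [← Finset.val_le_iff]
              show l.ilabels ≤ A'.val
              rw [← hrest]; exact Multiset.le_add_right _ _
            have hCval : (A' \ B).val = r.ilabels := by
              rw [Finset.sdiff_val, ← hrest]
              show (l.ilabels + r.ilabels) - l.ilabels = r.ilabels
              rw [add_tsub_cancel_left]
            have hCk : (A' \ B).card ≤ k := by rw [hsdc B hBsub]; omega
            exact (hGmem _ hCk r).mpr ⟨hCval.symm, hri⟩
    · -- cardinality
      rw [← Nat.cast_inj (R := ℚ), Finset.card_eq_sum_ones]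
      push_cast
      rw [hsum (fun _ => (1 : ℚ))]
      have : ∀ B ∈ A'.powerset, (∑ l ∈ G B, ∑ r ∈ G (A' \ B), (1 : ℚ)) =
          ((fun c => ((c.factorial * (k - c).factorial : ℕ) : ℚ)) B.card) := by
        intro B hB
        rw [Finset.mem_powerset] at hB
        obtain ⟨hc1, -, hc2, -⟩ := hGfacts B hB
        simp [Finset.sum_const, hc1, hc2]
      rw [Finset.sum_congr rfl this,
        Finset.sum_powerset_apply_card (fun c => ((c.factorial * (k - c).factorial : ℕ) : ℚ)),
        hA'card]
      have : ∀ i ∈ Finset.range (k + 1),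
          k.choose i • ((((i.factorial * (k - i).factorial : ℕ)) : ℚ)) = (k.factorial : ℚ) := by
        intro i hi
        rw [Finset.mem_range] at hi
        rw [nsmul_eq_mul]
        norm_cast
        rw [← mul_assoc, Nat.choose_mul_factorial_mul_factorial (by omega : i ≤ k)]
      rw [Finset.sum_congr rfl this, Finset.sum_const, Finset.card_range, nsmul_eq_mul]
      push_cast [Nat.factorial_succ]
      ring
    · -- the cr sum
      rw [hsum (fun t => (t.cr : ℚ))]
      have : ∀ B ∈ A'.powerset, (∑ l ∈ G B, ∑ r ∈ G (A' \ B), ((LTree.node m l r).cr : ℚ)) =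
          ((fun c => (s c + (c.factorial : ℚ)) * (s (k - c) + ((k - c).factorial : ℚ))) B.card) := by
        intro B hB
        rw [Finset.mem_powerset] at hB
        obtain ⟨hc1, hs1, hc2, hs2⟩ := hGfacts B hB
        have : ∀ l r : LTree, ((LTree.node m l r).cr : ℚ) = ((l.cr : ℚ) + 1) * ((r.cr : ℚ) + 1) := by
          intro l r
          show (((l.cr + 1) * (r.cr + 1) : ℕ) : ℚ) = _
          push_cast; ring
        simp only [this]
        rw [← Finset.sum_mul_sum]
        simp only [Finset.sum_add_distrib, Finset.sum_const, hs1, hs2, hc1, hc2,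
          nsmul_eq_mul, mul_one]
      rw [Finset.sum_congr rfl this,
        Finset.sum_powerset_apply_card
          (fun c => (s c + (c.factorial : ℚ)) * (s (k - c) + ((k - c).factorial : ℚ))),
        hA'card, s_succ]
      refine Finset.sum_congr rfl fun i _ => ?_
      rw [nsmul_eq_mul]
      ring

lemma e_eq (n : ℕ) (hn : 1 ≤ n) : e n = s (n - 1) / ((n - 1).factorial : ℚ) := by
  have hcard : (Finset.Icc 1 (n - 1)).card = n - 1 := by
    rw [Nat.card_Icc]; omega
  obtain ⟨F, hF, hFcard, hFsum⟩ := key (n - 1) (Finset.Icc 1 (n - 1)) hcard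
  have hset : {t : LTree | IsHistory n t} = ↑F := by
    ext t
    simp only [Set.mem_setOf_eq, Finset.coe_insert, Finset.mem_coe, hF, IsHistory]
    constructor
    · rintro ⟨-, h1, h2⟩; exact ⟨h1, h2⟩
    · rintro ⟨h1, h2⟩
      refine ⟨?_, h1, h2⟩
      rw [nLeaves_eq_card, h1, ← Finset.card_def, hcard]
      omega
  rw [e]
  congr 1
  have h1 : ∑ᶠ t : {t : LTree // IsHistory n t}, ((t : LTree).cr : ℚ) =
      ∑ᶠ t ∈ {t : LTree | IsHistory n t}, ((t.cr : ℚ)) :=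
    finsum_set_coe_eq_finsum_mem (f := fun t : LTree => (t.cr : ℚ)) {t : LTree | IsHistory n t}
  rw [h1, hset, finsum_mem_coe_finset, hFsum]

theorem mean_root_config_recurrence_histories :
    e 1 = 0 ∧
    ∀ n : ℕ, 2 ≤ n →
      ((n : ℚ) - 1) * e n =
        (∑ j ∈ Finset.Icc 1 (n - 1), e j * e (n - j)) +
          2 * (∑ j ∈ Finset.Icc 1 (n - 1), e j) + ((n : ℚ) - 1) := by
  constructor
  · rw [e_eq 1 le_rfl]
    simp [s]
  · intro n hn
    -- rewrite all e's via e_eq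
    have hrefl : ∑ j ∈ Finset.Icc 1 (n - 1), e (n - j) = ∑ j ∈ Finset.Icc 1 (n - 1), e j := by
      refine Finset.sum_nbij' (fun j => n - j) (fun j => n - j) ?_ ?_ ?_ ?_ ?_ <;>
        intro a ha <;> simp only [Finset.mem_Icc] at * <;>
        omega
    have key2 : ((n : ℚ) - 1) * e n = ∑ j ∈ Finset.Icc 1 (n - 1), (e j + 1) * (e (n - j) + 1) := by
      have hIcc : Finset.Icc 1 (n - 1) = Finset.Ico 1 n := by
        rw [← Finset.Ico_add_one_right_eq_Icc]
        congr 1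
        omega
      rw [hIcc, Finset.sum_Ico_eq_sum_range]
      have hn2 : n - 1 = (n - 2) + 1 := by omega
      rw [e_eq n (by omega), hn2, s_succ]
      rw [Finset.sum_div, Finset.mul_sum]
      refine Finset.sum_congr rfl fun i hi => ?_
      rw [Finset.mem_range] at hi
      have hik : i ≤ n - 2 := by omega
      rw [e_eq (1 + i) (by omega), e_eq (n - (1 + i)) (by omega)]
      have h1 : 1 + i - 1 = i := by omega
      have h2 : n - (1 + i) - 1 = n - 2 - i := by omega
      rw [h1, h2]
      have hfac : ((n - 2 + 1).factorial : ℚ) = ((n : ℚ) - 1) * ((n - 2).factorial : ℚ) := by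
        rw [Nat.factorial_succ]
        push_cast [Nat.cast_sub (by omega : 2 ≤ n)]
        ring
      have hchoose : ((n - 2).choose i : ℚ) =
          ((n - 2).factorial : ℚ) / ((i.factorial : ℚ) * ((n - 2 - i).factorial : ℚ)) := by
        rw [Nat.cast_choose ℚ hik]
      have f1 : (i.factorial : ℚ) ≠ 0 := Nat.cast_ne_zero.mpr (Nat.factorial_ne_zero i)
      have f2 : ((n - 2 - i).factorial : ℚ) ≠ 0 := Nat.cast_ne_zero.mpr (Nat.factorial_ne_zero _)
      have f3 : ((n - 2).factorial : ℚ) ≠ 0 := Nat.cast_ne_zero.mpr (Nat.factorial_ne_zero _)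
      have f4 : (n : ℚ) - 1 ≠ 0 := by
        have : (2 : ℚ) ≤ (n : ℚ) := by exact_mod_cast hn
        intro h
        nlinarith
      rw [hfac, hchoose]
      field_simp
    rw [key2]
    have expand : ∀ j ∈ Finset.Icc 1 (n - 1), (e j + 1) * (e (n - j) + 1) =
        e j * e (n - j) + e j + e (n - j) + 1 := by
      intro j _; ring
    rw [Finset.sum_congr rfl expand]
    simp only [Finset.sum_add_distrib, hrefl, Finset.sum_const, nsmul_eq_mul, mul_one]
    have hcard : (Finset.Icc 1 (n - 1)).card = n - 1 := by rw [Nat.card_Icc]; omega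
    rw [hcard]
    have : ((n - 1 : ℕ) : ℚ) = (n : ℚ) - 1 := by
      push_cast [Nat.cast_sub (by omega : 1 ≤ n)]
      ring
    rw [this]
    ring
end
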